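/- Let (E,A) and (F,B) be categories with dense generators and F:E→F a functor. Then F respects arities (ν_B∘F sends A-cocones to colimit cocones) if and only if for every object B of B, every object X of E, and every morphism f:B→FX, the factorisation category Fact_A(F,f) is connected. -/

import Mathlib

open CategoryTheory CategoryTheory.Limits

universe w v u₁ u₂

def canCocone {A : Type v} [SmallCategory A] {E : Type u₁} [Category.{v} E]
    (i : A ⥤ E) (X : E) : Cocone (CostructuredArrow.proj i X ⋙ i) where
  pt := X
  ι :=
    { app := fun f => f.hom
      naturality := fun f g m => by exact (CostructuredArrow.w m).trans (Category.comp_id _).symm }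

namespace CategoryTheory.Presheaf

def restrictedYoneda {C : Type v} [SmallCategory C] {ℰ : Type u₂} [Category.{v} ℰ]
    (A : C ⥤ ℰ) : ℰ ⥤ Cᵒᵖ ⥤ Type v :=
  yoneda ⋙ (Functor.whiskeringLeft _ _ (Type v)).obj (Functor.op A)

end CategoryTheory.Presheaf

def RespectsArities {A : Type v} [SmallCategory A] {E : Type u₁} [Category.{v} E]
    {B : Type v} [SmallCategory B] {F : Type u₂} [Category.{v} F]
    (iA : A ⥤ E) (iB : B ⥤ F) (Fn : E ⥤ F) : Prop :=
  ∀ X : E, Nonempty (IsColimit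
    ((Fn ⋙ Presheaf.restrictedYoneda iB).mapCocone (canCocone iA X)))

section FactCat

variable {A : Type w} [Category.{v} A] {E : Type u₁} [Category.{v} E]
  {F : Type u₂} [Category.{v} F]

/-- The factorisation category `Fact_A(F, f)`. -/
structure FactCat (i : A ⥤ E) (Fn : E ⥤ F) (B : F) (X : E) (f : B ⟶ Fn.obj X) where
  a : A
  g : B ⟶ Fn.obj (i.obj a)
  h : i.obj a ⟶ X
  fac : g ≫ Fn.map h = f

instance (i : A ⥤ E) (Fn : E ⥤ F) (B : F) (X : E) (f : B ⟶ Fn.obj X) :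
    Category (FactCat i Fn B X f) where
  Hom o₁ o₂ := {k : o₁.a ⟶ o₂.a //
    o₁.g ≫ Fn.map (i.map k) = o₂.g ∧ i.map k ≫ o₂.h = o₁.h}
  id o := ⟨𝟙 _, by simp⟩
  comp {o₁ o₂ o₃} k l := ⟨k.1 ≫ l.1, by
    obtain ⟨k, hk1, hk2⟩ := k
    obtain ⟨l, hl1, hl2⟩ := l
    constructor
    · simp [← hl1, ← hk1]
    · simp [hk2, hl2]⟩
  id_comp f := by apply Subtype.ext; simp
  comp_id f := by apply Subtype.ext; simp
  assoc f g h := by apply Subtype.ext; simp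

end FactCat

/-! Colimits of presheaves are computed pointwise, and a cocone `c` over a `Type`-valued diagram
`G` is a colimit exactly when, for every `y : c.pt`, the elements of `G` that `c` sends to `y`
span a connected full subcategory of the category of elements: the comparison map
`colim G → c.pt` is surjective iff these fibres are nonempty, and injective iff they are
preconnected, because `colim G` is the set of elements modulo zigzags. Evaluated at `b`, the
image of the canonical cocone of `X` has point `iB b ⟶ Fn X`, and the fibre over `f` is, up to
repackaging, the factorisation category `Fact_A(Fn, f)`. -/

namespace CategoryTheory.Limits

theorem nonempty_isColimit_iff_evaluation {J K C : Type*} [Category J] [Category K] [Category C]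
    [HasColimitsOfShape J C] {G : J ⥤ K ⥤ C} (c : Cocone G) :
    Nonempty (IsColimit c) ↔ ∀ k, Nonempty (IsColimit (((evaluation K C).obj k).mapCocone c)) :=
  ⟨fun ⟨hc⟩ _ => ⟨isColimitOfPreserves _ hc⟩,
    fun h => ⟨evaluationJointlyReflectsColimits c fun k => (h k).some⟩⟩

namespace Types

variable {J : Type*} [Category J] {G : J ⥤ Type w} (c : Cocone G)

abbrev ElementsOver (y : c.pt) : Type _ :=
  ObjectProperty.FullSubcategory fun p : G.Elements => c.ι.app p.1 p.2 = y

variable {c} in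
theorem zigzag_elementsOver_of_eqvGen {y : c.pt} {p q : Σ j, G.obj j}
    (h : Relation.EqvGen G.ColimitTypeRel p q) (hp : c.ι.app p.1 p.2 = y)
    (hq : c.ι.app q.1 q.2 = y) :
    Zigzag (⟨p, hp⟩ : ElementsOver c y) ⟨q, hq⟩ := by
  induction h with
  | rel p q h =>
    obtain ⟨k, hk⟩ := h
    exact Zigzag.of_hom (ObjectProperty.homMk ⟨k, hk.symm⟩)
  | refl => rfl
  | symm _ _ _ ih => exact (ih hq hp).symm
  | trans p r q hpr _ ih₁ ih₂ =>
    have hr : c.ι.app r.1 r.2 = y :=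
      (congrArg (G.descColimitType (G.coconeTypesEquiv.symm c))
        ((G.ιColimitType_eq_iff _ _).2 hpr)).symm.trans hp
    exact (ih₁ hp hr).trans (ih₂ hr hq)

theorem descColimitType_injective_iff :
    Function.Injective (G.descColimitType (G.coconeTypesEquiv.symm c)) ↔
      ∀ y, IsPreconnected (ElementsOver c y) := by
  constructor
  · intro hinj y
    refine zigzag_isPreconnected fun o₁ o₂ => zigzag_elementsOver_of_eqvGen
      ((G.ιColimitType_eq_iff _ _).1 (hinj ?_)) o₁.property o₂.property
    exact o₁.property.trans o₂.property.symm
  · intro hconn x x' hxx'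
    obtain ⟨j, a, rfl⟩ := G.ιColimitType_jointly_surjective x
    obtain ⟨j', a', rfl⟩ := G.ιColimitType_jointly_surjective x'
    exact constant_of_preserves_morphisms (J := ElementsOver c _)
      (fun o => G.ιColimitType o.obj.1 o.obj.2)
      (fun o o' (f : o ⟶ o') => (G.ιColimitType_map f.hom.1 _).symm.trans (congrArg _ f.hom.2))
      ⟨⟨j, a⟩, rfl⟩ ⟨⟨j', a'⟩, hxx'.symm⟩

theorem descColimitType_surjective_iff :
    Function.Surjective (G.descColimitType (G.coconeTypesEquiv.symm c)) ↔
      ∀ y, Nonempty (ElementsOver c y) := by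
  rw [Functor.CoconeTypes.descColimitType_surjective_iff]
  exact forall_congr' fun y =>
    ⟨fun ⟨j, a, ha⟩ => ⟨⟨⟨j, a⟩, ha⟩⟩, fun ⟨⟨⟨j, a⟩, ha⟩⟩ => ⟨j, a, ha⟩⟩

theorem nonempty_isColimit_iff_isConnected_elementsOver :
    Nonempty (IsColimit c) ↔ ∀ y, IsConnected (ElementsOver c y) := by
  rw [isColimit_iff_coconeTypesIsColimit]
  constructor
  · intro h y
    have := (descColimitType_injective_iff c).1 h.bijective.1 y
    have := (descColimitType_surjective_iff c).1 h.bijective.2 y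
    constructor
  · intro h
    exact ⟨(descColimitType_injective_iff c).2 fun y => (h y).toIsPreconnected,
      (descColimitType_surjective_iff c).2 fun y => (h y).is_nonempty⟩

end Types

end CategoryTheory.Limits

open Opposite in
def factCatEquivElementsOver {A : Type v} [SmallCategory A] {E : Type u₁} [Category.{v} E]
    {B : Type v} [SmallCategory B] {F : Type u₂} [Category.{v} F]
    (iA : A ⥤ E) (iB : B ⥤ F) (Fn : E ⥤ F) (b : B) (X : E) (f : iB.obj b ⟶ Fn.obj X) :
    FactCat iA Fn (iB.obj b) X f ≌ Types.ElementsOver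
      (((evaluation Bᵒᵖ (Type v)).obj (op b)).mapCocone
        ((Fn ⋙ Presheaf.restrictedYoneda iB).mapCocone (canCocone iA X))) f :=
  CategoryTheory.Equivalence.mk
    { obj o := ⟨⟨CostructuredArrow.mk o.h, o.g⟩, o.fac⟩
      map k := ObjectProperty.homMk ⟨CostructuredArrow.homMk k.1 k.2.2, k.2.1⟩
      map_id _ := rfl
      map_comp _ _ := rfl }
    { obj p := ⟨p.obj.1.left, p.obj.2, p.obj.1.hom, p.property⟩
      map m := ⟨m.hom.1.left, m.hom.2, CostructuredArrow.w m.hom.1⟩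
      map_id _ := rfl
      map_comp _ _ := rfl }
    (NatIso.ofComponents (fun _ => Iso.refl _)
      fun _ => (Category.comp_id _).trans (Category.id_comp _).symm)
    (NatIso.ofComponents (fun _ => Iso.refl _)
      fun _ => (Category.comp_id _).trans (Category.id_comp _).symm)

theorem respectsArities_iff_factCat_connected_general
    {A : Type v} [SmallCategory A] {E : Type u₁} [Category.{v} E]
    {B : Type v} [SmallCategory B] {F : Type u₂} [Category.{v} F]
    (iA : A ⥤ E) (iB : B ⥤ F)
    (Fn : E ⥤ F) :
    RespectsArities iA iB Fn ↔
      ∀ (b : B) (X : E) (f : iB.obj b ⟶ Fn.obj X),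
        IsConnected (FactCat iA Fn (iB.obj b) X f) := by
  simp only [RespectsArities, nonempty_isColimit_iff_evaluation,
    Types.nonempty_isColimit_iff_isConnected_elementsOver,
    fun b X f => isConnected_iff_of_equivalence (factCatEquivElementsOver iA iB Fn b X f)]
  rw [forall_comm]
  exact Opposite.op_surjective.forall

/-- `F` respects arities iff all factorisation categories
`Fact_A(F,f)`, for `f : i_B(b) ⟶ F X`, are connected. -/
theorem respectsArities_iff_factCat_connected
    {A : Type v} [SmallCategory A] {E : Type u₁} [Category.{v} E]
    {B : Type v} [SmallCategory B] {F : Type u₂} [Category.{v} F]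
    (iA : A ⥤ E) (iB : B ⥤ F)
    (hA : (Presheaf.restrictedYoneda iA).Full ∧ (Presheaf.restrictedYoneda iA).Faithful)
    (hB : (Presheaf.restrictedYoneda iB).Full ∧ (Presheaf.restrictedYoneda iB).Faithful)
    (Fn : E ⥤ F) :
    RespectsArities iA iB Fn ↔
      ∀ (b : B) (X : E) (f : iB.obj b ⟶ Fn.obj X),
        IsConnected (FactCat iA Fn (iB.obj b) X f) :=
  respectsArities_iff_factCat_connected_general iA iB Fn
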